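/- Let γ ∈ [0,1), C > 0, θ ∈ (0,1), and suppose nonnegative reals a = ⟨x₀⟩ + ⟨y₀⟩ ≥ 2 and b, c ≥ 0 satisfy ((ν-1)/ν)·θ·a + b + c ≤ C(1 + a^γ) for some ν > 1. Then θ·a + b + c ≤ C'·θ^(-γ/(1-γ)) for a constant C' depending only on C, γ, ν. -/

import Mathlib

/-!
Since `a ≥ 1`, the right-hand side is at most `2C a^γ`. Young's inequality
`a^γ ≤ s a + s^(-γ/(1-γ))` with `s` proportional to `θ` lets half of the term `κ θ a`,
`κ = (ν-1)/ν`, absorb `2C a^γ`, leaving a multiple of `θ^(-γ/(1-γ))`; dividing by `κ/2 ≤ 1`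
restores the full coefficient of `θ a`.
-/

open Real

lemma rpow_le_mul_add_rpow_neg {γ a s : ℝ} (hγ0 : 0 ≤ γ) (hγ1 : γ < 1) (ha : 0 ≤ a)
    (hs : 0 < s) : a ^ γ ≤ s * a + s ^ (-(γ / (1 - γ))) := by
  have h1γ : 0 < 1 - γ := by linarith
  have hsa : 0 ≤ s * a := mul_nonneg hs.le ha
  have hsβ : 0 ≤ s ^ (-(γ / (1 - γ))) := rpow_nonneg hs.le _
  have hfactor : (s * a) ^ γ * (s ^ (-(γ / (1 - γ)))) ^ (1 - γ) = a ^ γ := by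
    rw [← rpow_mul hs.le, show -(γ / (1 - γ)) * (1 - γ) = -γ by field_simp,
      mul_rpow hs.le ha, mul_right_comm, ← rpow_add hs, add_neg_cancel, rpow_zero, one_mul]
  have amgm := geom_mean_le_arith_mean2_weighted hγ0 h1γ.le hsa hsβ (by ring)
  rw [hfactor] at amgm
  nlinarith

lemma half_add_le_of_mul_add_le_rpow {γ κ A θ a r : ℝ} (hγ0 : 0 ≤ γ) (hγ1 : γ < 1)
    (hκ : 0 < κ) (hA : 0 < A) (hθ : 0 < θ) (ha : 0 ≤ a)
    (h : κ * θ * a + r ≤ A * a ^ γ) :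
    κ * θ * a / 2 + r ≤ A * (κ / (2 * A)) ^ (-(γ / (1 - γ))) * θ ^ (-(γ / (1 - γ))) := by
  have hκA : 0 < κ / (2 * A) := by positivity
  have young := rpow_le_mul_add_rpow_neg hγ0 hγ1 ha (mul_pos hκA hθ)
  rw [mul_rpow hκA.le hθ.le] at young
  have hAs : A * (κ / (2 * A) * θ * a) = κ * θ * a / 2 := by field_simp
  nlinarith

theorem apriori_theta_estimate (γ C ν : ℝ) (hγ0 : 0 ≤ γ) (hγ1 : γ < 1)
    (hC : 0 < C) (hν : 1 < ν) :
    ∃ C' : ℝ, 0 < C' ∧ ∀ θ a b c : ℝ, 0 < θ → θ < 1 → 2 ≤ a → 0 ≤ b → 0 ≤ c →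
      ((ν - 1) / ν) * θ * a + b + c ≤ C * (1 + a ^ γ) →
      θ * a + b + c ≤ C' * θ ^ (-(γ / (1 - γ))) := by
  set κ := (ν - 1) / ν
  have hκ0 : 0 < κ := div_pos (by linarith) (by linarith)
  have hκ1 : κ ≤ 1 := (div_le_one (by linarith)).2 (by linarith)
  set K := 2 * C * (κ / (2 * (2 * C))) ^ (-(γ / (1 - γ)))
  refine ⟨2 / κ * K, by positivity, fun θ a b c hθ _ ha hb hc h => ?_⟩
  have haγ : 1 ≤ a ^ γ := one_le_rpow (by linarith) hγ0
  have hdouble : κ * θ * a + (b + c) ≤ 2 * C * a ^ γ := by nlinarith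
  have habsorb := half_add_le_of_mul_add_le_rpow hγ0 hγ1 hκ0 (by positivity) hθ
    (by linarith) hdouble
  have hθa : 0 ≤ θ * a := by nlinarith
  calc θ * a + b + c ≤ 2 / κ * (κ * θ * a / 2 + (b + c)) := by
        rw [mul_add, show 2 / κ * (κ * θ * a / 2) = θ * a by field_simp]
        have : 1 ≤ 2 / κ := by rw [le_div_iff₀ hκ0]; linarith
        nlinarith
    _ ≤ 2 / κ * (K * θ ^ (-(γ / (1 - γ)))) := by gcongr
    _ = 2 / κ * K * θ ^ (-(γ / (1 - γ))) := by ring
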